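/- arXiv:2402.12478 — 5 statements merged into one kernel-verified Lean document; each statement's English description precedes it below -/
import Mathlib

section
/- Let A be a commutative ring, and consider the ring Q = A[e, d_{i,j} : i ≥ 1, j ≥ 0]/(d_{i,j} - c_{i,j} - e·d_{i,j+1}), where c_{i,j} ∈ A are fixed constants. Then e is a regular element (non-zerodivisor) of Q. -/
/-!
STATEMENT 0: Let `A` be a commutative ring and let
`Q = A[e, d_{i,j} : i ≥ 1, j ≥ 0] / (d_{i,j} - c_{i,j} - e·d_{i,j+1})`,
where `c_{i,j} ∈ A` are fixed constants.  Then `e` is a regular element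
(non-zerodivisor) of `Q`.

We index the variables `d_{i+1,j}` by `Sum.inr (i, j)` (so the index `i : ℕ`
corresponds to the subscript `i + 1 ≥ 1`) and the variable `e` by `Sum.inl ()`.
-/

open MvPolynomial

/-- The ideal of relations `d_{i,j} - c_{i,j} - e·d_{i,j+1}`. -/
noncomputable def qRel (A : Type*) [CommRing A] (c : ℕ → ℕ → A) :
    Ideal (MvPolynomial (Unit ⊕ ℕ × ℕ) A) :=
  Ideal.span { p | ∃ i j : ℕ,
    p = X (Sum.inr (i, j)) - C (c i j) - X (Sum.inl ()) * X (Sum.inr (i, j + 1)) }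

/-!
Substituting `d_{i,j} ↦ c_{i,j} + c_{i,j+1} e + ⋯ + c_{i,k-1} e^{k-j-1} + e^{k-j} d_{i,k}` for all
`j ≤ k` gives an endomorphism `σ_k = toLevel c k` of the polynomial ring that is the identity modulo the
relations, fixes `e`, and kills every relation with `j < k`. If `e f` lies in the relation ideal,
then `e σ_k(f) = σ_k(e f) = 0` for `k` large, so `σ_k(f) = 0` because `e` is regular in the
polynomial ring, and hence `f ≡ σ_k(f) = 0` in `Q`.
-/

open Filter
open scoped nonZeroDivisors

theorem Ideal.Quotient.mk_mem_nonZeroDivisors_of_forall_exists_map_eq_zero {R ι : Type*}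
    [CommRing R] {I : Ideal R} {x : R} (σ : ι → R →+* R)
    (hσ : ∀ k, (Ideal.Quotient.mk I).comp (σ k) = Ideal.Quotient.mk I)
    (hσx : ∀ k, σ k x ∈ R⁰) (hI : ∀ f ∈ I, ∃ k, σ k f = 0) :
    Ideal.Quotient.mk I x ∈ (R ⧸ I)⁰ := by
  rw [mem_nonZeroDivisors_iff_right]
  intro y hy
  obtain ⟨f, rfl⟩ := Ideal.Quotient.mk_surjective y
  rw [← map_mul, Ideal.Quotient.eq_zero_iff_mem] at hy
  obtain ⟨k, hk⟩ := hI _ hy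
  have hσf : σ k f = 0 :=
    mem_nonZeroDivisors_iff_right.mp (hσx k) _ (by rwa [map_mul] at hk)
  rw [← hσ k, RingHom.comp_apply, hσf, map_zero]

section

variable {A : Type*} [CommRing A] (c : ℕ → ℕ → A)

local notation "𝐞" => X (Sum.inl ())

/-- `d_{i,j}` rewritten through `d_{i,j+t}` by `t` applications of the relations. -/
noncomputable def dExpand (i : ℕ) : ℕ → ℕ → MvPolynomial (Unit ⊕ ℕ × ℕ) A
  | j, 0 => X (Sum.inr (i, j))
  | j, t + 1 => C (c i j) + 𝐞 * dExpand i (j + 1) t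

lemma mk_dExpand (i j t : ℕ) : Ideal.Quotient.mk (qRel A c) (dExpand c i j t) =
    Ideal.Quotient.mk (qRel A c) (X (Sum.inr (i, j))) := by
  induction t generalizing j with
  | zero => rfl
  | succ t ih =>
    have hrel : X (Sum.inr (i, j)) - C (c i j) - 𝐞 * X (Sum.inr (i, j + 1)) ∈ qRel A c :=
      Ideal.subset_span ⟨i, j, rfl⟩
    rw [dExpand, map_add, map_mul, ih, ← map_mul, ← map_add, Ideal.Quotient.eq]
    convert (qRel A c).neg_mem hrel using 1
    ring

noncomputable def toLevel (k : ℕ) :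
    MvPolynomial (Unit ⊕ ℕ × ℕ) A →+* MvPolynomial (Unit ⊕ ℕ × ℕ) A :=
  (aeval (Sum.elim (fun _ ↦ 𝐞) fun p ↦
    if p.2 ≤ k then dExpand c p.1 p.2 (k - p.2) else X (Sum.inr p))).toRingHom

@[simp]
lemma toLevel_C (k : ℕ) (a : A) : toLevel c k (C a) = C a := by
  simp [toLevel, algebraMap_eq]

@[simp]
lemma toLevel_e (k : ℕ) : toLevel c k (𝐞 : MvPolynomial (Unit ⊕ ℕ × ℕ) A) = 𝐞 := by
  simp [toLevel]

lemma toLevel_d_of_le {i j k : ℕ} (h : j ≤ k) :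
    toLevel c k (X (Sum.inr (i, j))) = dExpand c i j (k - j) := by
  simp [toLevel, h]

lemma mk_comp_toLevel (k : ℕ) :
    (Ideal.Quotient.mk (qRel A c)).comp (toLevel c k) = Ideal.Quotient.mk (qRel A c) := by
  apply MvPolynomial.ringHom_ext
  · intro a
    simp
  · rintro (⟨⟨⟩⟩ | ⟨i, j⟩)
    · simp
    · by_cases hj : j ≤ k
      · rw [RingHom.comp_apply, toLevel_d_of_le c hj, mk_dExpand]
      · simp [toLevel, hj]

lemma toLevel_rel {i j k : ℕ} (h : j < k) :
    toLevel c k (X (Sum.inr (i, j)) - C (c i j) - 𝐞 * X (Sum.inr (i, j + 1))) = 0 := by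
  have hk : k - j = k - (j + 1) + 1 := by omega
  rw [map_sub, map_sub, map_mul, toLevel_e, toLevel_d_of_le c h.le, toLevel_d_of_le c h, hk,
    dExpand, toLevel_C]
  ring

lemma eventually_toLevel_eq_zero {f : MvPolynomial (Unit ⊕ ℕ × ℕ) A} (hf : f ∈ qRel A c) :
    ∀ᶠ k in atTop, toLevel c k f = 0 := by
  induction hf using Submodule.span_induction with
  | mem p hp =>
    obtain ⟨i, j, rfl⟩ := hp
    filter_upwards [eventually_gt_atTop j] with k hk using toLevel_rel c hk
  | zero => exact .of_forall fun k ↦ map_zero _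
  | add f g _ _ hf hg =>
    filter_upwards [hf, hg] with k hfk hgk
    rw [map_add, hfk, hgk, add_zero]
  | smul a f _ hf =>
    filter_upwards [hf] with k hfk
    rw [smul_eq_mul, map_mul, hfk, mul_zero]

end

theorem e_regular_in_Q (A : Type*) [CommRing A] (c : ℕ → ℕ → A) :
    (Ideal.Quotient.mk (qRel A c) (X (Sum.inl ())) :
        MvPolynomial (Unit ⊕ ℕ × ℕ) A ⧸ qRel A c) ∈
      nonZeroDivisors (MvPolynomial (Unit ⊕ ℕ × ℕ) A ⧸ qRel A c) :=
  Ideal.Quotient.mk_mem_nonZeroDivisors_of_forall_exists_map_eq_zero (toLevel c)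
    (mk_comp_toLevel c) (fun k ↦ by rw [toLevel_e]; exact isRegular_X.mem_nonZeroDivisors)
    fun _ hf ↦ (eventually_toLevel_eq_zero c hf).exists
end

section
/- Let A be a commutative ring and c_{i,j} ∈ A fixed constants for i ≥ 1, j ≥ 0. Let Q = A[e, d_{i,j}]/(d_{i,j} - c_{i,j} - e·d_{i,j+1}). Then the natural map Q → A[[e]] sending d_{i,j} to the power series Σ_{ℓ≥0} c_{i,j+ℓ} e^ℓ becomes an isomorphism after e-adic completion of Q. -/
/-!
Unrolling the relation `d_{i,j} = c_{i,j} + e·d_{i,j+1}` `n` times gives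
`d_{i,j} ≡ Σ_{ℓ<n} c_{i,j+ℓ} e^ℓ (mod e^n)`, so every element of `Q ⧸ (e^n)` is a polynomial
in `e`. Such a polynomial is sent to itself, viewed as a power series, so `φ` induces
isomorphisms `Q ⧸ (e^n) ≃ A⟦X⟧ ⧸ (X^n)` for all `n`; as `A⟦X⟧` is `X`-adically complete,
the limit of these is an isomorphism from the completion of `Q` onto `A⟦X⟧`.
-/

open MvPolynomial

namespace AdicCompletion

variable {R : Type*} [CommRing R] (I : Ideal R)

theorem factorPow_evalₐ {m n : ℕ} (hmn : m ≤ n) (x : AdicCompletion I R) :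
    Ideal.Quotient.factorPow I hmn (evalₐ I n x) = evalₐ I m x := by
  obtain ⟨x, rfl⟩ := mk_surjective I R x
  rw [evalₐ_mk, evalₐ_mk, Ideal.Quotient.factor_mk, Ideal.Quotient.eq]
  simpa [SModEq.sub_mem] using (x.property hmn).symm

theorem exists_ringEquiv_of_comap_pow_eq {S : Type*} [CommRing S] {J : Ideal S}
    [IsAdicComplete J S] (φ : R →+* S) (hcomap : ∀ n, (J ^ n).comap φ = I ^ n)
    (hsurj : ∀ n, Function.Surjective ((Ideal.Quotient.mk (J ^ n)).comp φ)) :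
    ∃ g : AdicCompletion I R ≃+* S, ∀ r, g (of I R r) = φ r := by
  let f n : AdicCompletion I R →+* S ⧸ J ^ n :=
    (Ideal.quotientMap (J ^ n) φ (hcomap n).ge).comp (evalₐ I n)
  have hf {m n : ℕ} (hmn : m ≤ n) : (Ideal.Quotient.factorPow J hmn).comp (f n) = f m := by
    ext x
    obtain ⟨r, hr⟩ := Ideal.Quotient.mk_surjective (evalₐ I n x)
    simp [f, ← factorPow_evalₐ I hmn x, ← hr]
  let G := IsAdicComplete.liftRingHom J f hf
  have hG n x r (hr : evalₐ I n x = Ideal.Quotient.mk _ r) :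
      Ideal.Quotient.mk (J ^ n) (G x) = Ideal.Quotient.mk _ (φ r) := by
    simp [G, f, hr]
  have hG_inj : Function.Injective G := by
    refine (injective_iff_map_eq_zero G).2 fun x hx => ext_evalₐ fun n => ?_
    obtain ⟨r, hr⟩ := Ideal.Quotient.mk_surjective (evalₐ I n x)
    have hr_mem := hG n x r hr.symm
    rw [hx, _root_.map_zero, eq_comm, Ideal.Quotient.eq_zero_iff_mem, ← Ideal.mem_comap,
      hcomap] at hr_mem
    rw [← hr, Ideal.Quotient.eq_zero_iff_mem.2 hr_mem, _root_.map_zero]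
  have hG_surj : Function.Surjective G := by
    intro s
    choose r hr using fun n => hsurj n (Ideal.Quotient.mk _ s)
    have hr' n : φ (r n) - s ∈ J ^ n := Ideal.Quotient.eq.1 (hr n)
    let x : AdicCauchySequence I R := ⟨r, fun {m n} hmn => by
      rw [SModEq.sub_mem, smul_eq_mul, Ideal.mul_top, ← hcomap, Ideal.mem_comap, map_sub]
      simpa using Ideal.sub_mem _ (hr' m) (Ideal.pow_le_pow_right hmn (hr' n))⟩
    refine ⟨mk I R x, (IsHausdorff.eq_iff_smodEq (I := J)).2 fun n => ?_⟩
    simpa using! (hG n _ (r n) (evalₐ_mk I n x)).trans (hr n)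
  refine ⟨RingEquiv.ofBijective G ⟨hG_inj, hG_surj⟩, fun r => ?_⟩
  refine (IsHausdorff.eq_iff_smodEq (I := J)).2 fun n => ?_
  simpa using! hG n _ r (evalₐ_of I n r)

end AdicCompletion

namespace PowerSeries

variable {A R : Type*} [CommRing A] [CommRing R] [Algebra A R] {e : R}

theorem algHom_aeval_eq_coe (φ : R →ₐ[A] A⟦X⟧) (he : φ e = X) (p : Polynomial A) :
    φ (Polynomial.aeval e p) = p := by
  rw [← Polynomial.aeval_algHom_apply, he, Polynomial.aeval_def, ← Polynomial.eval₂_C_X_eq_coe]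
  rfl

theorem comap_span_X_pow_eq_span_pow (φ : R →ₐ[A] A⟦X⟧) (he : φ e = X)
    (hpoly : ∀ n, Function.Surjective
      ((Ideal.Quotient.mkₐ A (Ideal.span {e} ^ n)).comp (Polynomial.aeval e))) (n : ℕ) :
    (Ideal.span {X} ^ n).comap φ = Ideal.span {e} ^ n := by
  ext r
  rw [Ideal.mem_comap, Ideal.span_singleton_pow, Ideal.span_singleton_pow,
    Ideal.mem_span_singleton, Ideal.mem_span_singleton]
  obtain ⟨p, hp⟩ := hpoly n (Ideal.Quotient.mk _ r)
  rw [AlgHom.comp_apply, Ideal.Quotient.mkₐ_eq_mk, Ideal.Quotient.eq, Ideal.span_singleton_pow,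
    Ideal.mem_span_singleton] at hp
  obtain ⟨t, ht⟩ := hp
  obtain rfl : r = Polynomial.aeval e p - e ^ n * t := by rw [← ht, sub_sub_cancel]
  constructor
  · intro h
    rw [map_sub, map_mul, map_pow, he, algHom_aeval_eq_coe φ he,
      dvd_sub_left (dvd_mul_right _ _)] at h
    have hXp : Polynomial.X ^ n ∣ p := Polynomial.X_pow_dvd_iff.2 fun d hd => by
      simpa using X_pow_dvd_iff.1 h d hd
    refine (dvd_sub_left (dvd_mul_right _ _)).2 ?_
    simpa using map_dvd (Polynomial.aeval e) hXp
  · rintro ⟨u, hu⟩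
    exact ⟨φ u, by rw [hu, map_mul, map_pow, he]⟩

theorem surjective_quotient_mk_span_X_pow_comp (φ : R →ₐ[A] A⟦X⟧) (he : φ e = X) (n : ℕ) :
    Function.Surjective ((Ideal.Quotient.mk (Ideal.span {X} ^ n)).comp (φ : R →+* A⟦X⟧)) := by
  rintro ⟨s⟩
  refine ⟨Polynomial.aeval e (trunc n s), Ideal.Quotient.eq.2 ?_⟩
  rw [Ideal.span_singleton_pow, Ideal.mem_span_singleton]
  nth_rw 2 [eq_X_pow_mul_shift_add_trunc n s]
  simp [algHom_aeval_eq_coe φ he]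

end PowerSeries

namespace qRel

variable {A : Type*} [CommRing A] (c : ℕ → ℕ → A)

local notation "Q" => MvPolynomial (Unit ⊕ ℕ × ℕ) A ⧸ qRel A c

noncomputable abbrev e : Q := Ideal.Quotient.mk _ (X (Sum.inl ()))

noncomputable abbrev d (i j : ℕ) : Q := Ideal.Quotient.mk _ (X (Sum.inr (i, j)))

theorem d_eq (i j : ℕ) : d c i j = algebraMap A Q (c i j) + e c * d c i (j + 1) := by
  rw [← sub_eq_iff_eq_add', ← sub_eq_zero]
  exact Ideal.Quotient.eq_zero_iff_mem.2 (Ideal.subset_span ⟨i, j, rfl⟩)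

theorem d_eq_aeval_add (n i j : ℕ) :
    d c i j = Polynomial.aeval (e c)
        (∑ ℓ ∈ Finset.range n, Polynomial.C (c i (j + ℓ)) * Polynomial.X ^ ℓ) +
      e c ^ n * d c i (j + n) := by
  induction n with
  | zero => simp
  | succ n ih =>
    rw [ih, d_eq c i (j + n), Finset.sum_range_succ, map_add]
    simp only [map_mul, map_pow, Polynomial.aeval_C, Polynomial.aeval_X, ← add_assoc]
    ring

theorem surjective_aeval_e (n : ℕ) : Function.Surjective
    ((Ideal.Quotient.mkₐ A (Ideal.span {e c} ^ n)).comp (Polynomial.aeval (e c))) := by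
  rw [← AlgHom.range_eq_top, eq_top_iff]
  rintro x -
  obtain ⟨q, rfl⟩ := Ideal.Quotient.mk_surjective x
  obtain ⟨m, rfl⟩ := Ideal.Quotient.mk_surjective q
  induction m using MvPolynomial.induction_on with
  | C a => exact Subalgebra.algebraMap_mem _ a
  | add p q hp hq => simpa using add_mem hp hq
  | mul_X p s hp =>
    rw [map_mul, map_mul]
    refine mul_mem hp ?_
    rcases s with _ | ⟨i, j⟩
    · exact ⟨Polynomial.X, by simp⟩
    · refine ⟨∑ ℓ ∈ Finset.range n, Polynomial.C (c i (j + ℓ)) * Polynomial.X ^ ℓ, ?_⟩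
      change Ideal.Quotient.mk _ (Polynomial.aeval (e c) _) = Ideal.Quotient.mk _ (d c i j)
      rw [d_eq_aeval_add c n i j, eq_comm, Ideal.Quotient.eq, add_sub_cancel_left]
      exact Ideal.mul_mem_right _ _ (Ideal.pow_mem_pow (Ideal.mem_span_singleton_self _) n)

end qRel

theorem completion_iso_powerSeries_general (A : Type*) [CommRing A] (c : ℕ → ℕ → A)
    (φ : (MvPolynomial (Unit ⊕ ℕ × ℕ) A ⧸ qRel A c) →+* PowerSeries A)
    (hC : ∀ a : A, φ (Ideal.Quotient.mk (qRel A c) (C a)) = PowerSeries.C a)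
    (he : φ (Ideal.Quotient.mk (qRel A c) (X (Sum.inl ()))) = PowerSeries.X) :
    ∃ g : AdicCompletion
        (Ideal.span {Ideal.Quotient.mk (qRel A c) (X (Sum.inl ()))})
        (MvPolynomial (Unit ⊕ ℕ × ℕ) A ⧸ qRel A c) ≃+* PowerSeries A,
      ∀ q : MvPolynomial (Unit ⊕ ℕ × ℕ) A ⧸ qRel A c,
        g (AdicCompletion.of
            (Ideal.span {Ideal.Quotient.mk (qRel A c) (X (Sum.inl ()))})
            (MvPolynomial (Unit ⊕ ℕ × ℕ) A ⧸ qRel A c) q) = φ q := by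
  let φₐ : (MvPolynomial (Unit ⊕ ℕ × ℕ) A ⧸ qRel A c) →ₐ[A] PowerSeries A :=
    { φ with commutes' := hC }
  exact AdicCompletion.exists_ringEquiv_of_comap_pow_eq _ φ
    (PowerSeries.comap_span_X_pow_eq_span_pow φₐ he (qRel.surjective_aeval_e c))
    (PowerSeries.surjective_quotient_mk_span_X_pow_comp φₐ he)

theorem completion_iso_powerSeries (A : Type*) [CommRing A] (c : ℕ → ℕ → A)
    (φ : (MvPolynomial (Unit ⊕ ℕ × ℕ) A ⧸ qRel A c) →+* PowerSeries A)
    (hC : ∀ a : A, φ (Ideal.Quotient.mk (qRel A c) (C a)) = PowerSeries.C a)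
    (he : φ (Ideal.Quotient.mk (qRel A c) (X (Sum.inl ()))) = PowerSeries.X)
    (hd : ∀ i j : ℕ, φ (Ideal.Quotient.mk (qRel A c) (X (Sum.inr (i, j)))) =
        PowerSeries.mk fun ℓ => c i (j + ℓ)) :
    ∃ g : AdicCompletion
        (Ideal.span {Ideal.Quotient.mk (qRel A c) (X (Sum.inl ()))})
        (MvPolynomial (Unit ⊕ ℕ × ℕ) A ⧸ qRel A c) ≃+* PowerSeries A,
      ∀ q : MvPolynomial (Unit ⊕ ℕ × ℕ) A ⧸ qRel A c,
        g (AdicCompletion.of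
            (Ideal.span {Ideal.Quotient.mk (qRel A c) (X (Sum.inl ()))})
            (MvPolynomial (Unit ⊕ ℕ × ℕ) A ⧸ qRel A c) q) = φ q :=
  completion_iso_powerSeries_general A c φ hC he
end

section
/- Let A be a commutative ring and c_{i,j} ∈ A fixed constants for i ≥ 1, j ≥ 0. Let Q = A[e, d_{i,j}]/(d_{i,j} - c_{i,j} - e·d_{i,j+1}). Then the natural map Q → A[e^{±1}, d_1, d_2, ...] (Laurent polynomials in e and polynomial generators d_i) sending d_{i,j} ↦ d_i·e^{-j} - Σ_{0≤ℓ<j} c_{i,ℓ}·e^{ℓ-j} becomes an isomorphism after inverting e. -/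
/-!
After inverting `e`, the relation `d_{i,j} = c_{i,j} + e·d_{i,j+1}` can be solved for every
`d_{i,j}` in terms of `d_{i,0}`: `d_{i,j} = e^{-j}·d_{i,0} - Σ_{ℓ<j} c_{i,ℓ}·e^{ℓ-j}`. So
`e ↦ e`, `d_i ↦ d_{i,0}` defines a ring map `A[e^{±1}, d_1, d_2, …] → Q[e⁻¹]`, and it is
inverse to the map induced by `φ`, as one checks on generators.
-/

open MvPolynomial

namespace LaurentPolynomial

theorem ringHom_ext {R S : Type*} [CommSemiring R] [Semiring S] {f g : R[T;T⁻¹] →+* S}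
    (hC : f.comp C = g.comp C) (hT : f (T 1) = g (T 1)) : f = g :=
  IsLocalization.ringHom_ext (Submonoid.powers (Polynomial.X : Polynomial R)) <|
    Polynomial.ringHom_ext (fun a => by simpa using RingHom.congr_fun hC a) (by simpa using hT)

end LaurentPolynomial

open Finset in
theorem eq_sum_mul_pow_add_pow_mul {R : Type*} [CommSemiring R] {u : R} {a x : ℕ → R}
    (h : ∀ j, x j = a j + u * x (j + 1)) (j : ℕ) :
    x 0 = ∑ ℓ ∈ range j, a ℓ * u ^ ℓ + u ^ j * x j := by
  induction j with
  | zero => simp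
  | succ j ih => rw [ih, h j, sum_range_succ]; ring

open Finset in
theorem eq_zpow_neg_mul_sub_sum {R : Type*} [CommRing R] {u : Rˣ} {a x : ℕ → R}
    (h : ∀ j, x j = a j + u * x (j + 1)) (j : ℕ) :
    x j = ↑(u ^ (-(j : ℤ))) * x 0 - ∑ ℓ ∈ range j, a ℓ * ↑(u ^ ((ℓ : ℤ) - j)) := by
  have hzpow (ℓ : ℕ) : (↑(u ^ ((ℓ : ℤ) - j)) : R) = ↑(u ^ (-(j : ℤ))) * ↑u ^ ℓ := by
    rw [sub_eq_neg_add, zpow_add, Units.val_mul, zpow_natCast, Units.val_pow_eq_pow_val]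
  have hinv : (↑(u ^ (-(j : ℤ))) : R) * ↑u ^ j = 1 := by
    rw [← Units.val_pow_eq_pow_val, ← Units.val_mul, zpow_neg, zpow_natCast, inv_mul_cancel,
      Units.val_one]
  simp only [hzpow, mul_left_comm _ (↑(u ^ (-(j : ℤ))) : R), ← mul_sum]
  rw [eq_sum_mul_pow_add_pow_mul h j]
  linear_combination (x j) * hinv.symm

section

variable {A : Type*} [CommRing A] (c : ℕ → ℕ → A)

local notation "Q" => MvPolynomial (Unit ⊕ ℕ × ℕ) A ⧸ qRel A c
local notation "mkQ" => Ideal.Quotient.mk (qRel A c)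
local notation "L" => Localization.Away (mkQ (X (Sum.inl ())))

theorem mk_d_eq_add_mul (i j : ℕ) :
    mkQ (X (Sum.inr (i, j))) =
      mkQ (C (c i j)) + mkQ (X (Sum.inl ())) * mkQ (X (Sum.inr (i, j + 1))) := by
  rw [← sub_eq_zero, ← map_mul, ← map_add, ← map_sub, Ideal.Quotient.eq_zero_iff_mem, ← sub_sub]
  exact Ideal.subset_span ⟨i, j, rfl⟩

noncomputable def eAwayUnit : Lˣ :=
  (IsLocalization.Away.algebraMap_isUnit (S := L) (mkQ (X (Sum.inl ())))).unit

theorem val_eAwayUnit : (eAwayUnit c : L) = algebraMap Q L (mkQ (X (Sum.inl ()))) :=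
  IsUnit.unit_spec _

theorem algebraMap_mk_d_eq_add_mul (i j : ℕ) :
    algebraMap Q L (mkQ (X (Sum.inr (i, j)))) = algebraMap Q L (mkQ (C (c i j))) +
      eAwayUnit c * algebraMap Q L (mkQ (X (Sum.inr (i, j + 1)))) := by
  rw [mk_d_eq_add_mul, map_add, map_mul, val_eAwayUnit]

noncomputable def toQAway : MvPolynomial ℕ (LaurentPolynomial A) →+* L :=
  eval₂Hom (LaurentPolynomial.eval₂ ((algebraMap Q L).comp ((mkQ).comp C)) (eAwayUnit c))
    fun i => algebraMap Q L (mkQ (X (Sum.inr (i, 0))))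

theorem toQAway_comp_eq_algebraMap (φ : Q →+* MvPolynomial ℕ (LaurentPolynomial A))
    (hC : ∀ a : A, φ (mkQ (C a)) = C (LaurentPolynomial.C a))
    (he : φ (mkQ (X (Sum.inl ()))) = C (LaurentPolynomial.T 1))
    (hd : ∀ i j : ℕ, φ (mkQ (X (Sum.inr (i, j)))) =
        C (LaurentPolynomial.T (-(j : ℤ))) * X i -
          ∑ ℓ ∈ Finset.range j,
            C (LaurentPolynomial.C (c i ℓ) * LaurentPolynomial.T ((ℓ : ℤ) - j))) :
    (toQAway c).comp φ = algebraMap Q L := by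
  refine Ideal.Quotient.ringHom_ext (MvPolynomial.ringHom_ext (fun a => ?_) ?_)
  · simp [toQAway, hC]
  · rintro (⟨⟩ | ⟨i, j⟩)
    · simp [toQAway, he, val_eAwayUnit]
    · simp only [toQAway, RingHom.comp_apply, hd, map_sub, map_mul, map_sum, eval₂Hom_C,
        eval₂Hom_X', LaurentPolynomial.eval₂_T, LaurentPolynomial.eval₂_C]
      exact (eq_zpow_neg_mul_sub_sum (algebraMap_mk_d_eq_add_mul c i) j).symm

theorem lift_comp_toQAway (φ : Q →+* MvPolynomial ℕ (LaurentPolynomial A))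
    (hC : ∀ a : A, φ (mkQ (C a)) = C (LaurentPolynomial.C a))
    (he : φ (mkQ (X (Sum.inl ()))) = C (LaurentPolynomial.T 1))
    (hd : ∀ i, φ (mkQ (X (Sum.inr (i, 0)))) = X i)
    (hu : IsUnit (φ (mkQ (X (Sum.inl ()))))) :
    (IsLocalization.Away.lift (S := L) _ hu).comp (toQAway c) = RingHom.id _ := by
  refine MvPolynomial.ringHom_ext (fun a => ?_) fun i => ?_
  · have hLaurent : (IsLocalization.Away.lift (S := L) _ hu).comp
        (LaurentPolynomial.eval₂ ((algebraMap Q L).comp ((mkQ).comp C)) (eAwayUnit c)) = C :=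
      LaurentPolynomial.ringHom_ext (RingHom.ext fun b => by simp [hC])
        (by simp [val_eAwayUnit, he])
    simpa [toQAway] using RingHom.congr_fun hLaurent a
  · simp [toQAway, hd]

end

theorem localization_away_e_iso (A : Type*) [CommRing A] (c : ℕ → ℕ → A)
    (φ : (MvPolynomial (Unit ⊕ ℕ × ℕ) A ⧸ qRel A c) →+*
      MvPolynomial ℕ (LaurentPolynomial A))
    (hC : ∀ a : A, φ (Ideal.Quotient.mk (qRel A c) (C a)) =
        C (LaurentPolynomial.C a))
    (he : φ (Ideal.Quotient.mk (qRel A c) (X (Sum.inl ()))) =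
        C (LaurentPolynomial.T 1))
    (hd : ∀ i j : ℕ, φ (Ideal.Quotient.mk (qRel A c) (X (Sum.inr (i, j)))) =
        C (LaurentPolynomial.T (-(j : ℤ))) * X i -
          ∑ ℓ ∈ Finset.range j,
            C (LaurentPolynomial.C (c i ℓ) * LaurentPolynomial.T ((ℓ : ℤ) - j))) :
    ∃ g : Localization.Away
          (Ideal.Quotient.mk (qRel A c) (X (Sum.inl ()))) ≃+*
        MvPolynomial ℕ (LaurentPolynomial A),
      ∀ q : MvPolynomial (Unit ⊕ ℕ × ℕ) A ⧸ qRel A c,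
        g (algebraMap _ _ q) = φ q := by
  have hu : IsUnit (φ (Ideal.Quotient.mk (qRel A c) (X (Sum.inl ())))) :=
    he ▸ (LaurentPolynomial.isUnit_T 1).map C
  have hd₀ (i : ℕ) : φ (Ideal.Quotient.mk (qRel A c) (X (Sum.inr (i, 0)))) = X i := by
    simp [hd]
  refine ⟨.ofRingHom (IsLocalization.Away.lift _ hu) (toQAway c)
    (lift_comp_toQAway c φ hC he hd₀ hu) ?_, IsLocalization.Away.lift_eq _ hu⟩
  refine IsLocalization.ringHom_ext
    (Submonoid.powers (Ideal.Quotient.mk (qRel A c) (X (Sum.inl ())))) ?_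
  rw [RingHom.comp_assoc, IsLocalization.Away.lift_comp, toQAway_comp_eq_algebraMap c φ hC he hd,
    RingHom.id_comp]
end

section
/- Let A be a commutative ring, c_{i,j} ∈ A, and R = A[e, d_{i,j}]/(d_{i,j} - c_{i,j} - e·d_{i,j+1}). Then every element f ∈ R can be written as f = f_0(d_{i,j}) + e·f_1(d_{i,0}, e), where f_0 is a polynomial over A in the variables d_{i,j} alone and f_1 is a polynomial over A in e and the variables d_{i,0}. -/
/-!
The classes `f₀(d) + e·f₁(e, d_{·,0})` form an `A`-submodule containing the constants, so it
suffices that it is stable under multiplication by `e` and by every `d_{i,j}`. Both cases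
reduce to `e·d_{i,j}·f₁(e, d_{·,0})` being of this form, which follows by induction on `j`:
the relation `e·d_{i,j+1} = d_{i,j} - c_{i,j}` lowers `j`, and at `j = 0` the factor `d_{i,0}`
is absorbed into `f₁`.
-/

open MvPolynomial

theorem MvPolynomial.exists_eq_rename_inr_add_X_inl_mul {A τ : Type*} [CommSemiring A]
    (p : MvPolynomial (Unit ⊕ τ) A) :
    ∃ (q : MvPolynomial τ A) (r : MvPolynomial (Unit ⊕ τ) A),
      p = rename Sum.inr q + X (Sum.inl ()) * r := by
  induction p using MvPolynomial.induction_on with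
  | C a => exact ⟨C a, 0, by simp⟩
  | add p p' hp hp' =>
    obtain ⟨q, r, rfl⟩ := hp
    obtain ⟨q', r', rfl⟩ := hp'
    exact ⟨q + q', r + r', by simp only [map_add]; ring⟩
  | mul_X p v hp =>
    obtain ⟨q, r, rfl⟩ := hp
    rcases v with ⟨⟩ | t
    · exact ⟨0, rename Sum.inr q + X (Sum.inl ()) * r, by simp only [map_zero]; ring⟩
    · exact ⟨q * X t, r * X (Sum.inr t), by simp only [map_mul, rename_X]; ring⟩

namespace NormalForm

/-- `e` and the `d_{i,0}`, the variables allowed in `f₁`. -/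
def eDZero : Unit ⊕ ℕ → Unit ⊕ ℕ × ℕ := Sum.map id fun i => (i, 0)

theorem exists_rename_eDZero_eq {A : Type*} [CommSemiring A] (r : MvPolynomial (Unit ⊕ ℕ) A) :
    ∃ (q : MvPolynomial (ℕ × ℕ) A) (r' : MvPolynomial (Unit ⊕ ℕ) A),
      rename eDZero r = rename Sum.inr q + X (Sum.inl ()) * rename eDZero r' := by
  obtain ⟨q, r', rfl⟩ := exists_eq_rename_inr_add_X_inl_mul r
  refine ⟨rename (fun i => (i, 0)) q, r', ?_⟩
  simp only [map_add, map_mul, rename_rename, rename_X]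
  rfl

variable {A : Type*} [CommRing A] (c : ℕ → ℕ → A)

local notation "mk" => Ideal.Quotient.mk (qRel A c)

theorem mk_X_inl_mul_mk_X_inr_succ (i j : ℕ) :
    mk (X (Sum.inl ())) * mk (X (Sum.inr (i, j + 1))) =
      mk (X (Sum.inr (i, j))) - mk (C (c i j)) := by
  rw [← map_mul, ← map_sub, Ideal.Quotient.eq, ← neg_sub, sub_sub]
  exact neg_mem (Ideal.subset_span ⟨i, j, by ring⟩)

def normalForms : Submodule A (MvPolynomial (Unit ⊕ ℕ × ℕ) A ⧸ qRel A c) where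
  carrier := {x | ∃ q r, x = mk (rename Sum.inr q) + mk (X (Sum.inl ())) * mk (rename eDZero r)}
  add_mem' := by
    rintro _ _ ⟨q, r, rfl⟩ ⟨q', r', rfl⟩
    exact ⟨q + q', r + r', by simp only [map_add]; ring⟩
  zero_mem' := ⟨0, 0, by simp⟩
  smul_mem' := by
    rintro a _ ⟨q, r, rfl⟩
    exact ⟨a • q, a • r, by
      simp only [map_smul, ← Ideal.Quotient.mkₐ_eq_mk A, smul_add, mul_smul_comm]⟩

theorem mk_rename_inr_mem (q : MvPolynomial (ℕ × ℕ) A) :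
    mk (rename Sum.inr q) ∈ normalForms c :=
  ⟨q, 0, by simp⟩

theorem mk_X_inl_mul_mk_rename_eDZero_mem (r : MvPolynomial (Unit ⊕ ℕ) A) :
    mk (X (Sum.inl ())) * mk (rename eDZero r) ∈ normalForms c :=
  ⟨0, r, by simp⟩

theorem mk_rename_eDZero_mem (r : MvPolynomial (Unit ⊕ ℕ) A) :
    mk (rename eDZero r) ∈ normalForms c := by
  obtain ⟨q, r', hr⟩ := exists_rename_eDZero_eq r
  exact ⟨q, r', by rw [hr, map_add, map_mul]⟩

theorem mk_X_inl_mul_mk_X_inr_mul_mem (i j : ℕ) (r : MvPolynomial (Unit ⊕ ℕ) A) :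
    mk (X (Sum.inl ())) * mk (X (Sum.inr (i, j))) * mk (rename eDZero r) ∈ normalForms c := by
  induction j generalizing r with
  | zero =>
    have h : X (Sum.inr (i, 0)) =
        rename eDZero (X (Sum.inr i) : MvPolynomial (Unit ⊕ ℕ) A) := by
      rw [rename_X]; rfl
    rw [h, mul_assoc, ← map_mul, ← map_mul (rename eDZero)]
    exact mk_X_inl_mul_mk_rename_eDZero_mem c _
  | succ j ih =>
    obtain ⟨q, r', hr⟩ := exists_rename_eDZero_eq r
    have h : mk (X (Sum.inl ())) * mk (X (Sum.inr (i, j + 1))) * mk (rename eDZero r) =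
        mk (rename Sum.inr (X (i, j) * q)) +
          mk (X (Sum.inl ())) * mk (X (Sum.inr (i, j))) * mk (rename eDZero r') -
          mk (rename eDZero (C (c i j) * r)) := by
      rw [mk_X_inl_mul_mk_X_inr_succ, map_mul (rename eDZero), rename_C, hr]
      simp only [map_add, map_mul, rename_X]
      ring
    rw [h]
    exact sub_mem (add_mem (mk_rename_inr_mem c _) (ih r')) (mk_rename_eDZero_mem c _)

theorem mk_X_inl_mul_mk_rename_inr_mem (q : MvPolynomial (ℕ × ℕ) A) :
    mk (X (Sum.inl ())) * mk (rename Sum.inr q) ∈ normalForms c := by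
  induction q using MvPolynomial.induction_on with
  | C a => simpa using mk_X_inl_mul_mk_rename_eDZero_mem c (C a)
  | add q q' hq hq' => simpa only [map_add, mul_add] using add_mem hq hq'
  | mul_X q v hq =>
    obtain ⟨q', r', h⟩ := hq
    have : mk (X (Sum.inl ())) * mk (rename Sum.inr (q * X v)) =
        mk (rename Sum.inr (q' * X v)) +
          mk (X (Sum.inl ())) * mk (X (Sum.inr v)) * mk (rename eDZero r') := by
      simp only [map_mul, rename_X, ← mul_assoc, h]
      ring
    rw [this]
    exact add_mem (mk_rename_inr_mem c _) (mk_X_inl_mul_mk_X_inr_mul_mem c v.1 v.2 r')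

theorem mul_mk_X_mem {x} (hx : x ∈ normalForms c) (v : Unit ⊕ ℕ × ℕ) :
    x * mk (X v) ∈ normalForms c := by
  obtain ⟨q, r, rfl⟩ := hx
  rcases v with ⟨⟩ | t
  · have h : (mk (rename Sum.inr q) + mk (X (Sum.inl ())) * mk (rename eDZero r)) *
          mk (X (Sum.inl ())) =
        mk (X (Sum.inl ())) * mk (rename Sum.inr q) +
          mk (X (Sum.inl ())) * mk (rename eDZero (X (Sum.inl ()) * r)) := by
      simp only [map_mul, rename_X]; rw [eDZero, Sum.map_inl]; ring
    rw [h]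
    exact add_mem (mk_X_inl_mul_mk_rename_inr_mem c q) (mk_X_inl_mul_mk_rename_eDZero_mem c _)
  · have h : (mk (rename Sum.inr q) + mk (X (Sum.inl ())) * mk (rename eDZero r)) *
          mk (X (Sum.inr t)) =
        mk (rename Sum.inr (q * X t)) +
          mk (X (Sum.inl ())) * mk (X (Sum.inr t)) * mk (rename eDZero r) := by
      simp only [map_mul, rename_X]; ring
    rw [h]
    exact add_mem (mk_rename_inr_mem c _) (mk_X_inl_mul_mk_X_inr_mul_mem c t.1 t.2 r)

theorem mem_normalForms (x : MvPolynomial (Unit ⊕ ℕ × ℕ) A ⧸ qRel A c) :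
    x ∈ normalForms c := by
  obtain ⟨p, rfl⟩ := Ideal.Quotient.mk_surjective x
  induction p using MvPolynomial.induction_on with
  | C a => simpa using mk_rename_inr_mem c (C a)
  | add p p' hp hp' => simpa only [map_add] using add_mem hp hp'
  | mul_X p v hp => simpa only [map_mul] using mul_mk_X_mem c hp v

end NormalForm

theorem normal_form_in_R (A : Type*) [CommRing A] (c : ℕ → ℕ → A)
    (f : MvPolynomial (Unit ⊕ ℕ × ℕ) A ⧸ qRel A c) :
    ∃ f₀ f₁ : MvPolynomial (Unit ⊕ ℕ × ℕ) A,
      (∀ v ∈ f₀.vars, ∃ p : ℕ × ℕ, v = Sum.inr p) ∧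
      (∀ v ∈ f₁.vars, v = Sum.inl () ∨ ∃ i : ℕ, v = Sum.inr (i, 0)) ∧
      f = Ideal.Quotient.mk (qRel A c) f₀ +
          Ideal.Quotient.mk (qRel A c) (X (Sum.inl ())) *
            Ideal.Quotient.mk (qRel A c) f₁ := by
  obtain ⟨q, r, hf⟩ := NormalForm.mem_normalForms c f
  refine ⟨rename Sum.inr q, rename NormalForm.eDZero r, ?_, ?_, hf⟩
  · intro v hv
    obtain ⟨p, -, rfl⟩ := mem_vars_rename _ _ hv
    exact ⟨p, rfl⟩
  · intro v hv
    obtain ⟨⟨⟩ | i, -, rfl⟩ := mem_vars_rename _ _ hv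
    exacts [Or.inl rfl, Or.inr ⟨i, rfl⟩]
end

section
/- Let A be a commutative ring, c_{i,j} ∈ A, and let R = A[e, d_{i,j}]/(d_{i,j} - c_{i,j} - e·d_{i,j+1}). The kernel of the natural surjection A[d_{i,j} : i ≥ 1, j ≥ 0] → (the A-subalgebra of R generated by the d_{i,j}) is generated by the elements (d_{i,j} - c_{i,j})·d_{k,ℓ+1} - d_{i,j+1}·(d_{k,ℓ} - c_{k,ℓ}) for i, k ≥ 1 and j, ℓ ≥ 0. -/
/-!
STATEMENT 7: Let `R = A[e, d_{i,j}]/(d_{i,j} - c_{i,j} - e·d_{i,j+1})`.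
The kernel of the natural map `A[d_{i,j} : i ≥ 1, j ≥ 0] → R` (whose image is
the `A`-subalgebra of `R` generated by the `d_{i,j}`) is generated by the
elements `(d_{i,j} - c_{i,j})·d_{k,ℓ+1} - d_{i,j+1}·(d_{k,ℓ} - c_{k,ℓ})`.

The variable `d_{i+1,j}` is indexed by `(i, j) : ℕ × ℕ` (resp. `Sum.inr (i,j)`;
the index `i : ℕ` corresponds to the subscript `i + 1 ≥ 1`), and `e` by `Sum.inl ()`.
-/

open MvPolynomial

/-!
Write `B = A[d]`, `u_a = d_a - c_a` and `v_a = d_{a + (0,1)}`, so that `A[e, d] = B[e]` and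
the relations read `u_a - e v_a`. If `p = ∑ f_a (u_a - e v_a)` with `f_a ∈ B[e]`, comparing
coefficients of `e^k` gives `U_0 = p` and `U_{k+1} = V_k`, where `U_k = ∑ f_{a,k} u_a` and
`V_k = ∑ f_{a,k} v_a`. Let `J` be the ideal of the minors `u_a v_b - v_a u_b`. Since the `v_a`
are distinct variables, every syzygy of `v` is a combination of Koszul syzygies, and this yields
`V_k ∈ J → U_k ∈ J`. Hence `U_{k+1} ∈ J → U_k ∈ J`, and descending from `k > deg` gives
`p = U_0 ∈ J`.
-/

open Finsupp

section Koszul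

variable {B α : Type*} [CommRing B]

noncomputable def koszulSyzygy (v : α → B) (a b : α) : α →₀ B :=
  single a (v b) - single b (v a)

noncomputable def koszulSyzygies (v : α → B) : Submodule B (α →₀ B) :=
  Submodule.span B (Set.range (Function.uncurry (koszulSyzygy v)))

def HasOnlyKoszulSyzygies (v : α → B) : Prop :=
  LinearMap.ker (linearCombination B v) ≤ koszulSyzygies v

theorem linearCombination_koszulSyzygy (u v : α → B) (a b : α) :
    linearCombination B u (koszulSyzygy v a b) = u a * v b - v a * u b := by
  simp [koszulSyzygy, mul_comm]

theorem single_sub_smul_mem_koszulSyzygies (v : α → B) (a : α) (l : α →₀ B) :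
    single a (linearCombination B v l) - v a • l ∈ koszulSyzygies v := by
  induction l using Finsupp.induction_linear with
  | zero => simp
  | add f g hf hg =>
    convert add_mem hf hg using 1
    simp only [map_add, single_add, smul_add]
    abel
  | single c x =>
    have hac : koszulSyzygy v a c ∈ koszulSyzygies v :=
      Submodule.subset_span (Set.mem_range_self (a, c))
    convert Submodule.smul_mem _ x hac using 1
    simp [koszulSyzygy, smul_sub, mul_comm]

theorem koszulSyzygies_le_ker (v : α → B) :
    koszulSyzygies v ≤ LinearMap.ker (linearCombination B v) := by
  rw [koszulSyzygies, Submodule.span_le]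
  rintro _ ⟨⟨a, b⟩, rfl⟩
  simp [linearCombination_koszulSyzygy]

theorem hasOnlyKoszulSyzygies_of_mul_mem_span {v : α → B}
    (hv : ∀ (s : Finset α) (a : α), a ∉ s → ∀ b : B,
      b * v a ∈ Ideal.span (v '' s) → b ∈ Ideal.span (v '' s)) :
    HasOnlyKoszulSyzygies v := by
  classical
  intro g hg
  suffices ∀ s : Finset α, ∀ g ∈ supported B B (s : Set α),
      linearCombination B v g = 0 → g ∈ koszulSyzygies v from
    this g.support g (by simp [mem_supported]) hg
  intro s
  induction s using Finset.induction_on with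
  | empty =>
    intro g hgs _
    simp [Finsupp.supported_empty] at hgs
    simp [hgs]
  | insert a s ha ih =>
    intro g hgs hg0
    have herase : g.erase a ∈ supported B B (s : Set α) := by
      rw [mem_supported'] at hgs ⊢
      intro x hx
      by_cases hxa : x = a
      · simp [hxa]
      · simp [erase_ne hxa, hgs x (by simp [hxa, hx])]
    have hmul : g a * v a ∈ Ideal.span (v '' s) := by
      have : linearCombination B v (g.erase a) = -(g a * v a) := by
        simp [erase_eq_sub_single, hg0]
      simpa [this] using (mem_span_image_iff_linearCombination (v := v) B).2 ⟨_, herase, rfl⟩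
    obtain ⟨l, hl, hlv⟩ :=
      (mem_span_image_iff_linearCombination (v := v) B).1 (hv s a ha _ hmul)
    have hkz := single_sub_smul_mem_koszulSyzygies v a l
    have hreduced :
        g - (single a (linearCombination B v l) - v a • l) = g.erase a + v a • l := by
      rw [hlv, erase_eq_sub_single]
      abel
    have := ih _ (hreduced ▸ add_mem herase (Submodule.smul_mem _ _ hl))
      (by rw [map_sub, hg0, koszulSyzygies_le_ker v hkz, sub_zero])
    simpa using add_mem this hkz

variable (u v : α → B)

def minorIdeal : Ideal B :=
  Ideal.span (Set.range fun ab : α × α => u ab.1 * v ab.2 - v ab.1 * u ab.2)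

theorem minorIdeal_le_map_ker :
    minorIdeal u v ≤ (LinearMap.ker (linearCombination B u)).map (linearCombination B v) := by
  rw [minorIdeal, Ideal.span, Submodule.span_le]
  rintro _ ⟨⟨a, b⟩, rfl⟩
  refine ⟨koszulSyzygy u b a, ?_, ?_⟩
  · simp [linearCombination_koszulSyzygy]
  · rw [linearCombination_koszulSyzygy]
    ring

variable {u v}

theorem HasOnlyKoszulSyzygies.ker_le_comap_minorIdeal (hv : HasOnlyKoszulSyzygies v) :
    LinearMap.ker (linearCombination B v) ≤
      Submodule.comap (linearCombination B u) (minorIdeal u v) := by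
  refine hv.trans (Submodule.span_le.2 ?_)
  rintro _ ⟨⟨a, b⟩, rfl⟩
  exact Ideal.subset_span ⟨(a, b), (linearCombination_koszulSyzygy u v a b).symm⟩

theorem HasOnlyKoszulSyzygies.comap_minorIdeal_le (hv : HasOnlyKoszulSyzygies v) :
    Submodule.comap (linearCombination B v) (minorIdeal u v) ≤
      Submodule.comap (linearCombination B u) (minorIdeal u v) := by
  intro g hg
  obtain ⟨K, hKu, hKv⟩ := minorIdeal_le_map_ker u v hg
  have := hv.ker_le_comap_minorIdeal (u := u) (show g - K ∈ _ by simp [hKv])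
  simpa [LinearMap.mem_ker.1 hKu] using this

end Koszul

section Polynomial

open scoped Polynomial

variable {B α : Type*}

theorem coeff_linearCombination_C [Semiring B] (w : α → B) (co : α →₀ B[X]) (k : ℕ) :
    (linearCombination B[X] (fun a => Polynomial.C (w a)) co).coeff k =
      linearCombination B w (co.mapRange (Polynomial.coeff · k) (Polynomial.coeff_zero k)) := by
  induction co using Finsupp.induction_linear with
  | zero => simp
  | add f g hf hg => simp [hf, hg, mapRange_add]
  | single a q => simp

theorem HasOnlyKoszulSyzygies.mem_minorIdeal_of_C_mem_span [CommRing B] {u v : α → B}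
    (hv : HasOnlyKoszulSyzygies v)
    {p : B} (hp : Polynomial.C p ∈
      Ideal.span (Set.range fun a => Polynomial.C (u a) - Polynomial.X * Polynomial.C (v a))) :
    p ∈ minorIdeal u v := by
  obtain ⟨co, hco⟩ := (Finsupp.mem_span_range_iff_exists_finsupp).1 hp
  set U := linearCombination B[X] (fun a => Polynomial.C (u a)) co
  set V := linearCombination B[X] (fun a => Polynomial.C (v a)) co
  have hUV : U = Polynomial.C p + Polynomial.X * V := by
    rw [← hco]
    simp only [U, V, linearCombination_apply, Finsupp.sum, smul_eq_mul, mul_sub,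
      Finset.sum_sub_distrib, Finset.mul_sum, mul_left_comm (Polynomial.X : B[X])]
    abel
  have hstep : ∀ k, U.coeff (k + 1) ∈ minorIdeal u v → U.coeff k ∈ minorIdeal u v := by
    intro k hk
    rw [hUV, Polynomial.coeff_add, Polynomial.coeff_C_succ, Polynomial.coeff_X_mul, zero_add,
      coeff_linearCombination_C] at hk
    rw [coeff_linearCombination_C]
    exact hv.comap_minorIdeal_le hk
  have hcoeff : ∀ k ≤ U.natDegree + 1, U.coeff k ∈ minorIdeal u v := fun k hk =>
    Nat.decreasingInduction (motive := fun k _ => U.coeff k ∈ minorIdeal u v)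
      (fun k _ => hstep k) (by simp) hk
  simpa [hUV] using hcoeff 0 (Nat.zero_le _)

end Polynomial

theorem MvPolynomial.mem_span_X_image_of_mul_X_mem {R σ : Type*} [CommSemiring R] {s : Set σ}
    {i : σ} (hi : i ∉ s) {p : MvPolynomial σ R}
    (h : p * X i ∈ Ideal.span (X '' s)) : p ∈ Ideal.span (X '' s) := by
  rw [mem_ideal_span_X_image] at h ⊢
  intro m hm
  obtain ⟨j, hj, hmj⟩ := h (m + single i 1) (by simpa [support_mul_X] using hm)
  have hji : j ≠ i := fun hji => hi (hji ▸ hj)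
  exact ⟨j, hj, by simpa [single_apply, hji.symm] using hmj⟩

theorem MvPolynomial.hasOnlyKoszulSyzygies_X_comp {R σ α : Type*} [CommRing R] {t : α → σ}
    (ht : Function.Injective t) : HasOnlyKoszulSyzygies fun a => (X (t a) : MvPolynomial σ R) := by
  refine hasOnlyKoszulSyzygies_of_mul_mem_span fun s a ha b hb => ?_
  rw [← Set.image_image X t] at hb ⊢
  exact mem_span_X_image_of_mul_X_mem (ht.mem_set_image.not.2 ha) hb

section Presentation

variable {A : Type*} [CommRing A] (c : ℕ → ℕ → A)

theorem C_mem_span_of_rename_mem_qRel {p : MvPolynomial (ℕ × ℕ) A}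
    (hp : rename Sum.inr p ∈ qRel A c) :
    Polynomial.C p ∈ Ideal.span (Set.range fun a : ℕ × ℕ =>
      Polynomial.C (X a - C (c a.1 a.2)) - Polynomial.X * Polynomial.C (X (a.1, a.2 + 1))) := by
  let φ : MvPolynomial (Unit ⊕ ℕ × ℕ) A →ₐ[A]
      Polynomial (MvPolynomial (ℕ × ℕ) A) :=
    aeval (Sum.elim (fun _ => Polynomial.X) (fun a => Polynomial.C (X a)))
  have hφp : φ (rename Sum.inr p) = Polynomial.C p := by
    simpa [φ, aeval_rename, aeval_X_left_apply, Function.comp_def] using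
      aeval_algebraMap_apply (B := Polynomial (MvPolynomial (ℕ × ℕ) A))
        (X : ℕ × ℕ → MvPolynomial (ℕ × ℕ) A) p
  have hφ : Ideal.map φ (qRel A c) ≤ Ideal.span (Set.range fun a : ℕ × ℕ =>
      Polynomial.C (X a - C (c a.1 a.2)) - Polynomial.X * Polynomial.C (X (a.1, a.2 + 1))) := by
    rw [qRel, Ideal.map_span, Ideal.span_le]
    rintro _ ⟨_, ⟨i, j, rfl⟩, rfl⟩
    exact Ideal.subset_span ⟨(i, j), by simp [φ]⟩
  exact hφp ▸ hφ (Ideal.mem_map_of_mem φ hp)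

theorem minorIdeal_le_ker_mk_comp_rename :
    minorIdeal (fun a : ℕ × ℕ => X a - C (c a.1 a.2)) (fun a => X (a.1, a.2 + 1)) ≤
      RingHom.ker ((Ideal.Quotient.mk (qRel A c)).comp
        (rename (Sum.inr : ℕ × ℕ → Unit ⊕ ℕ × ℕ)).toRingHom) := by
  rw [minorIdeal, Ideal.span_le]
  rintro _ ⟨⟨a, b⟩, rfl⟩
  set π := Ideal.Quotient.mk (qRel A c)
  have hrel : ∀ a : ℕ × ℕ, π (X (Sum.inr a)) - π (C (c a.1 a.2)) =
      π (X (Sum.inl ())) * π (X (Sum.inr (a.1, a.2 + 1))) := fun a => by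
    rw [← map_sub, ← map_mul, Ideal.Quotient.eq]
    exact Ideal.subset_span ⟨a.1, a.2, rfl⟩
  simp only [SetLike.mem_coe, RingHom.mem_ker, RingHom.comp_apply, AlgHom.toRingHom_eq_coe,
    RingHom.coe_coe, map_sub, map_mul, rename_X, rename_C]
  linear_combination π (X (Sum.inr (b.1, b.2 + 1))) * hrel a -
    π (X (Sum.inr (a.1, a.2 + 1))) * hrel b

end Presentation

theorem kernel_of_subalgebra_presentation (A : Type*) [CommRing A] (c : ℕ → ℕ → A) :
    RingHom.ker ((Ideal.Quotient.mk (qRel A c)).comp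
        (MvPolynomial.rename (Sum.inr : ℕ × ℕ → Unit ⊕ ℕ × ℕ)).toRingHom) =
      Ideal.span { q : MvPolynomial (ℕ × ℕ) A | ∃ i j k l : ℕ,
        q = (X (i, j) - C (c i j)) * X (k, l + 1)
            - X (i, j + 1) * (X (k, l) - C (c k l)) } := by
  have hminors : Ideal.span { q : MvPolynomial (ℕ × ℕ) A | ∃ i j k l : ℕ,
      q = (X (i, j) - C (c i j)) * X (k, l + 1) - X (i, j + 1) * (X (k, l) - C (c k l)) } =
      minorIdeal (fun a : ℕ × ℕ => X a - C (c a.1 a.2)) (fun a => X (a.1, a.2 + 1)) := by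
    refine congrArg Ideal.span (Set.ext fun q => ⟨?_, ?_⟩)
    · rintro ⟨i, j, k, l, rfl⟩
      exact ⟨((i, j), (k, l)), rfl⟩
    · rintro ⟨⟨⟨i, j⟩, k, l⟩, rfl⟩
      exact ⟨i, j, k, l, rfl⟩
  have hshift : Function.Injective fun a : ℕ × ℕ => (a.1, a.2 + 1) := by
    rintro ⟨i, j⟩ ⟨k, l⟩ h
    simpa using h
  rw [hminors]
  refine le_antisymm (fun p hp => ?_) (minorIdeal_le_ker_mk_comp_rename c)
  exact (hasOnlyKoszulSyzygies_X_comp hshift).mem_minorIdeal_of_C_mem_span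
    (C_mem_span_of_rename_mem_qRel c (Ideal.Quotient.eq_zero_iff_mem.1 hp))
end
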